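/- arXiv:2005.00471 — 4 statements merged into one kernel-verified Lean document; each statement's English description precedes it below -/
import Mathlib

section
/- For every forecasting system Φ there exists at least one path ω that is computably random for Φ. -/
open Filter

/-- A coherent lower expectation on a nonempty finite sample space `X`. -/
def IsCoherent {X : Type} [Fintype X] [Nonempty X] (E : (X → ℝ) → ℝ) : Prop :=
  (∀ f : X → ℝ, Finset.univ.inf' Finset.univ_nonempty f ≤ E f) ∧
  (∀ (f : X → ℝ) (α : ℝ), 0 ≤ α → E (fun x => α * f x) = α * E f) ∧
  (∀ f g : X → ℝ, E f + E g ≤ E (fun x => f x + g x))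

/-- The conjugate upper expectation. -/
noncomputable def upperE {X : Type} (E : (X → ℝ) → ℝ) (f : X → ℝ) : ℝ :=
  -E (fun x => -f x)

/-- The process difference `ΔF(s)(x) = F(sx) − F(s)`. -/
noncomputable def procDiff {X : Type} (F : List X → ℝ) (s : List X) : X → ℝ :=
  fun x => F (s ++ [x]) - F s

/-- `M` is a supermartingale for the forecasting system `Φ`. -/
def IsSupermartingale {X : Type} (Φ : List X → (X → ℝ) → ℝ) (M : List X → ℝ) : Prop :=
  ∀ s : List X, upperE (Φ s) (procDiff M s) ≤ 0

/-- A real process is computable if some recursive net of rationals converges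
effectively to it. -/
def ComputableProcess {X : Type} [Primcodable X] (F : List X → ℝ) : Prop :=
  ∃ r : List X × ℕ → ℚ, Computable r ∧
    ∀ (s : List X) (n N : ℕ), N ≤ n → |(r (s, n) : ℝ) - F s| ≤ (2 : ℝ) ^ (-(N : ℤ))

/-- The length-`n` prefix `ω^n` of a path `ω`. -/
def prefixOf {X : Type} (ω : ℕ → X) (n : ℕ) : List X := (List.range n).map ω

/-- A path `ω` is computably random for the forecasting system `Φ` if every
computable nonnegative supermartingale for `Φ` is bounded above along `ω`. -/
def ComputablyRandom {X : Type} [Fintype X] [Nonempty X] [Primcodable X]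
    (Φ : List X → (X → ℝ) → ℝ) (ω : ℕ → X) : Prop :=
  ∀ M : List X → ℝ, ComputableProcess M → (∀ s, 0 ≤ M s) →
    IsSupermartingale Φ M → BddAbove (Set.range fun n => M (prefixOf ω n))

/-- A computable real number. -/
def ComputableReal (x : ℝ) : Prop :=
  ∃ r : ℕ → ℚ, Computable r ∧ ∀ n : ℕ, |(r n : ℝ) - x| ≤ (2 : ℝ) ^ (-(n : ℤ))

/-!
There are only countably many computable processes, so the computable nonnegative
supermartingales can be listed as `M 0, M 1, …`. With `c k = 2⁻¹ ^ (k + 1) / (1 + M k [])`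
every partial mixture `S K = ∑ k < K, c k • M k` is a nonnegative supermartingale with
`S K [] ≤ 1`. Coherence lets us always choose an outcome along which a supermartingale does not
increase, so the sets of paths along which `S K` stays below `1` are nonempty; they are closed
and decreasing in `K`, hence by compactness of `X^ℕ` they share a path `ω`. Along `ω` each
`M k` stays below `1 / c k`.
-/

open Topology

theorem Computable.countable_setOf {α β : Type} [Primcodable α] [Primcodable β] :
    {f : α → β | Computable f}.Countable := by
  let code : {f : α → β // Computable f} → {g : ℕ → ℕ // Computable g} := fun f =>
    ⟨fun n => Encodable.encode ((Encodable.decode n : Option α).map f.1),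
      Computable.encode.comp (Computable.option_map Computable.decode (f.2.comp Computable.snd))⟩
  have hcode : Function.Injective code := by
    intro f g h
    ext a
    simpa [code] using congrFun (congrArg Subtype.val h) (Encodable.encode a)
  exact Set.countable_coe_iff.mp hcode.countable

theorem eq_limUnder_of_abs_sub_le {u : ℕ → ℚ} {x : ℝ}
    (hu : ∀ n : ℕ, |(u n : ℝ) - x| ≤ (2 : ℝ) ^ (-(n : ℤ))) :
    x = limUnder atTop fun n => (u n : ℝ) := by
  refine (Tendsto.limUnder_eq ?_).symm
  have hgeom : Tendsto (fun n : ℕ => (2 : ℝ) ^ (-(n : ℤ))) atTop (𝓝 0) := by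
    simpa [zpow_neg, zpow_natCast, Function.comp_def] using
      tendsto_inv_atTop_zero.comp (tendsto_pow_atTop_atTop_of_one_lt (one_lt_two (α := ℝ)))
  exact tendsto_iff_norm_sub_tendsto_zero.mpr
    (squeeze_zero (fun _ => norm_nonneg _) hu hgeom)

theorem ComputableProcess.countable_setOf {X : Type} [Primcodable X] :
    {F : List X → ℝ | ComputableProcess F}.Countable := by
  refine ((Computable.countable_setOf (α := List X × ℕ) (β := ℚ)).image
    fun r s => limUnder atTop fun n => (r (s, n) : ℝ)).mono ?_
  rintro F ⟨r, hr, hrF⟩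
  exact ⟨r, hr, funext fun s => (eq_limUnder_of_abs_sub_le fun n => hrF s n n le_rfl).symm⟩

namespace IsCoherent

variable {X : Type} [Fintype X] [Nonempty X] {E : (X → ℝ) → ℝ}

theorem map_zero (hE : IsCoherent E) : E (fun _ => 0) = 0 := by
  simpa using hE.2.1 (fun _ => 0) 0 le_rfl

theorem le_upperE (hE : IsCoherent E) (f : X → ℝ) : E f ≤ upperE E f := by
  have h := hE.2.2 f (fun x => -f x)
  simp only [add_neg_cancel, hE.map_zero] at h
  rw [upperE]
  linarith

theorem exists_le_upperE (hE : IsCoherent E) (f : X → ℝ) : ∃ x, f x ≤ upperE E f := by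
  obtain ⟨x, -, hx⟩ := Finset.exists_mem_eq_inf' Finset.univ_nonempty f
  exact ⟨x, hx ▸ (hE.1 f).trans (hE.le_upperE f)⟩

theorem upperE_add_le (hE : IsCoherent E) (f g : X → ℝ) :
    upperE E (fun x => f x + g x) ≤ upperE E f + upperE E g := by
  have h := hE.2.2 (fun x => -f x) (fun x => -g x)
  simp only [← neg_add] at h
  rw [upperE, upperE, upperE]
  linarith

theorem upperE_const_mul (hE : IsCoherent E) (f : X → ℝ) {c : ℝ} (hc : 0 ≤ c) :
    upperE E (fun x => c * f x) = c * upperE E f := by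
  simp only [upperE, ← mul_neg, hE.2.1 _ c hc]

end IsCoherent

namespace IsSupermartingale

variable {X : Type} [Fintype X] [Nonempty X] {Φ : List X → (X → ℝ) → ℝ}

theorem zero (hΦ : ∀ s, IsCoherent (Φ s)) : IsSupermartingale Φ fun _ => 0 := fun s => by
  simp [procDiff, upperE, (hΦ s).map_zero]

theorem add (hΦ : ∀ s, IsCoherent (Φ s)) {M N : List X → ℝ} (hM : IsSupermartingale Φ M)
    (hN : IsSupermartingale Φ N) : IsSupermartingale Φ fun s => M s + N s := fun s => by
  have hdiff : procDiff (fun s => M s + N s) s = fun x => procDiff M s x + procDiff N s x := by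
    funext x
    simp only [procDiff]
    ring
  rw [hdiff]
  linarith [(hΦ s).upperE_add_le (procDiff M s) (procDiff N s), hM s, hN s]

theorem const_mul (hΦ : ∀ s, IsCoherent (Φ s)) {M : List X → ℝ} (hM : IsSupermartingale Φ M)
    {c : ℝ} (hc : 0 ≤ c) : IsSupermartingale Φ fun s => c * M s := fun s => by
  have hdiff : procDiff (fun s => c * M s) s = fun x => c * procDiff M s x := by
    funext x
    simp only [procDiff]
    ring
  rw [hdiff, (hΦ s).upperE_const_mul _ hc]
  exact mul_nonpos_of_nonneg_of_nonpos hc (hM s)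

theorem sum (hΦ : ∀ s, IsCoherent (Φ s)) {ι : Type} {M : ι → List X → ℝ} (t : Finset ι)
    (hM : ∀ i ∈ t, IsSupermartingale Φ (M i)) : IsSupermartingale Φ fun s => ∑ i ∈ t, M i s := by
  classical
  induction t using Finset.induction_on with
  | empty => simpa using zero hΦ
  | insert i t hi ih =>
    simp only [Finset.sum_insert hi]
    exact add hΦ (hM i (t.mem_insert_self i))
      (ih fun j hj => hM j (Finset.mem_insert_of_mem hj))

end IsSupermartingale

theorem prefixOf_succ {X : Type} (ω : ℕ → X) (n : ℕ) :
    prefixOf ω (n + 1) = prefixOf ω n ++ [ω n] := by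
  simp [prefixOf, List.range_succ]

theorem IsSupermartingale.exists_path_le {X : Type} [Fintype X] [Nonempty X]
    {Φ : List X → (X → ℝ) → ℝ} (hΦ : ∀ s, IsCoherent (Φ s)) {M : List X → ℝ}
    (hM : IsSupermartingale Φ M) : ∃ ω : ℕ → X, ∀ n, M (prefixOf ω n) ≤ M [] := by
  have hstep : ∀ s, ∃ x, M (s ++ [x]) ≤ M s := fun s => by
    obtain ⟨x, hx⟩ := (hΦ s).exists_le_upperE (procDiff M s)
    exact ⟨x, by linarith [hM s, show procDiff M s x = M (s ++ [x]) - M s from rfl]⟩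
  choose next hnext using hstep
  let situation : ℕ → List X := fun n => Nat.rec [] (fun _ s => s ++ [next s]) n
  have hprefix : ∀ n, prefixOf (fun k => next (situation k)) n = situation n := by
    intro n
    induction n with
    | zero => rfl
    | succ n ih => rw [prefixOf_succ, ih]
  refine ⟨fun k => next (situation k), fun n => ?_⟩
  rw [hprefix]
  induction n with
  | zero => exact le_rfl
  | succ n ih => exact (hnext (situation n)).trans ih

theorem continuous_prefixOf {X : Type} [TopologicalSpace X] [DiscreteTopology X] (n : ℕ) :
    Continuous fun ω : ℕ → X => prefixOf ω n := by
  induction n with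
  | zero => exact continuous_const
  | succ n ih =>
    simp only [prefixOf_succ]
    exact (continuous_of_discreteTopology (f := fun p : List X × X => p.1 ++ [p.2])).comp
      (ih.prodMk (continuous_apply n))

theorem exists_path_forall_prefixOf {X : Type} [Finite X] (P : ℕ → List X → Prop)
    (hP : ∀ K l, P (K + 1) l → P K l) (hne : ∀ K, ∃ ω : ℕ → X, ∀ n, P K (prefixOf ω n)) :
    ∃ ω : ℕ → X, ∀ K n, P K (prefixOf ω n) := by
  let _ : TopologicalSpace X := ⊥
  have : DiscreteTopology X := ⟨rfl⟩
  let A : ℕ → Set (ℕ → X) := fun K => ⋂ n, (fun ω => prefixOf ω n) ⁻¹' {l | P K l}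
  have hA_closed : ∀ K, IsClosed (A K) := fun K =>
    isClosed_iInter fun n => (isClosed_discrete _).preimage (continuous_prefixOf n)
  obtain ⟨ω, hω⟩ := IsCompact.nonempty_iInter_of_sequence_nonempty_isCompact_isClosed A
    (fun K => Set.iInter_mono fun n _ => hP K _) (fun K => by simpa [A, Set.Nonempty] using hne K)
    (hA_closed 0).isCompact hA_closed
  exact ⟨ω, by simpa [A] using hω⟩

theorem exists_path_forall_bddAbove {X : Type} [Fintype X] [Nonempty X]
    {Φ : List X → (X → ℝ) → ℝ} (hΦ : ∀ s, IsCoherent (Φ s)) (M : ℕ → List X → ℝ)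
    (hM_nonneg : ∀ k s, 0 ≤ M k s) (hM : ∀ k, IsSupermartingale Φ (M k)) :
    ∃ ω : ℕ → X, ∀ k, BddAbove (Set.range fun n => M k (prefixOf ω n)) := by
  let c : ℕ → ℝ := fun k => 2⁻¹ ^ (k + 1) / (1 + M k [])
  have hc_pos : ∀ k, 0 < c k := fun k => by have := hM_nonneg k []; positivity
  have hc_init : ∀ k, c k * M k [] ≤ 2⁻¹ ^ (k + 1) := fun k => by
    have := hM_nonneg k []
    rw [div_mul_eq_mul_div, div_le_iff₀ (by positivity)]
    nlinarith [pow_pos (by norm_num : (0 : ℝ) < 2⁻¹) (k + 1)]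
  let S : ℕ → List X → ℝ := fun K s => ∑ k ∈ Finset.range K, c k * M k s
  have hS_mono : ∀ K s, S K s ≤ S (K + 1) s := fun K s => by
    simp only [S, Finset.sum_range_succ, le_add_iff_nonneg_right]
    exact mul_nonneg (hc_pos K).le (hM_nonneg K s)
  have hS_init : ∀ K, S K [] ≤ 1 := fun K =>
    calc S K [] ≤ ∑ k ∈ Finset.range K, 2⁻¹ ^ (k + 1) := Finset.sum_le_sum fun k _ => hc_init k
      _ = 2⁻¹ * ∑ k ∈ Finset.range K, (1 / 2 : ℝ) ^ k := by
        rw [Finset.mul_sum]; simp [pow_succ, mul_comm]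
      _ ≤ 1 := by linarith [sum_geometric_two_le K]
  have hS : ∀ K, IsSupermartingale Φ (S K) := fun K =>
    IsSupermartingale.sum hΦ _ fun k _ => (hM k).const_mul hΦ (hc_pos k).le
  obtain ⟨ω, hω⟩ := exists_path_forall_prefixOf (fun K l => S K l ≤ 1)
    (fun K l h => (hS_mono K l).trans h) fun K => by
      obtain ⟨ω, hω⟩ := (hS K).exists_path_le hΦ
      exact ⟨ω, fun n => (hω n).trans (hS_init K)⟩
  refine ⟨ω, fun k => ⟨1 / c k, ?_⟩⟩
  rintro _ ⟨n, rfl⟩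
  have hterm : c k * M k (prefixOf ω n) ≤ S (k + 1) (prefixOf ω n) :=
    Finset.single_le_sum (f := fun i => c i * M i (prefixOf ω n))
      (fun i _ => mul_nonneg (hc_pos i).le (hM_nonneg i _)) (Finset.self_mem_range_succ k)
  rw [le_div_iff₀ (hc_pos k), mul_comm]
  exact hterm.trans (hω (k + 1) n)

/-- Every forecasting system has at least one computably random path. -/
theorem stmt_1 {X : Type} [Fintype X] [Nonempty X] [Primcodable X]
    (Φ : List X → (X → ℝ) → ℝ) (hΦ : ∀ s, IsCoherent (Φ s)) :
    ∃ ω : ℕ → X, ComputablyRandom Φ ω := by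
  let Tests : Set (List X → ℝ) :=
    {M | ComputableProcess M ∧ (∀ s, 0 ≤ M s) ∧ IsSupermartingale Φ M}
  have hzero : (fun _ => 0) ∈ Tests :=
    ⟨⟨fun _ => 0, Computable.const 0, fun _ _ _ _ => by simp⟩, fun _ => le_rfl,
      IsSupermartingale.zero hΦ⟩
  obtain ⟨M, hM⟩ := (ComputableProcess.countable_setOf.mono fun _ hM => hM.1 :
    Tests.Countable).exists_eq_range ⟨_, hzero⟩
  have hM_mem : ∀ k, M k ∈ Tests := fun k => hM ▸ Set.mem_range_self k
  obtain ⟨ω, hω⟩ := exists_path_forall_bddAbove hΦ M (fun k => (hM_mem k).2.1)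
    fun k => (hM_mem k).2.2
  refine ⟨ω, fun N hN_comp hN_nonneg hN_sm => ?_⟩
  obtain ⟨k, rfl⟩ : N ∈ Set.range M := hM ▸ ⟨hN_comp, hN_nonneg, hN_sm⟩
  exact hω k
end

section
/- Let Φ be a forecasting system, let B > 0 and 0 < ξ < 1/B be reals, let S : S → {0,1} be a selection process, and let M be a submartingale for Φ (i.e., E_s(ΔM(s)) ≥ 0 for all situations s) with |ΔM(s)(x)| ≤ B for all s and x. Define the real process F_M by F_M(x_{1:n}) := Π_{k=0}^{n−1} [1 − ξ·S(x_{1:k})·ΔM(x_{1:k})(x_{k+1})] for all n ∈ ℕ and all situations x_{1:n}. Then: (1) F_M is a positive supermartingale for Φ with F_M(□) = 1; (2) if moreover ξ = ε/(2B²) for some real 0 < ε < B, then for all n and all situations x_{1:n}: ⟨M⟩_S(x_{1:n}) ≤ −ε implies F_M(x_{1:n}) ≥ exp( (ε²/(4B²))·Σ_{k=0}^{n−1} S(x_{1:k}) ), where ⟨M⟩_S(x_{1:n}) := [Σ_{k=0}^{n−1} S(x_{1:k})·ΔM(x_{1:k})(x_{k+1})] / [Σ_{k=0}^{n−1} S(x_{1:k})]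 if Σ_{k=0}^{n−1} S(x_{1:k}) > 0 and ⟨M⟩_S(x_{1:n}) := 0 otherwise; (3) if ξ is a computable real, the selection process S is computable, and for each x ∈ X the real process s ↦ ΔM(s)(x) is computable, then F_M is a computable real process. -/
open Filter

/-!
`F` is the capital of a gambler who, in each selected situation, bets the fraction `ξ` of it
against the increment `ΔM`. As `M` is a submartingale the bet has nonpositive upper expectation,
so `F` is a supermartingale; it stays positive because `ξ |ΔM| ≤ ξ B < 1`. If the selected
average of `ΔM` is at most `-ε`, the bound `log (1 - t) ≥ -t - t²` for `|t| ≤ 1/2` gives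
`log F ≥ (ξ ε - ξ² B²) T = ε² T / (4 B²)`, `T` the number of selected rounds.

For computability each factor is approximated by rationals, and an error `δ` per factor costs at
most `|s| · 3^|s| · δ` in the product. The `Primcodable ℚ` structure numbers rationals by rank
among the codes `encode (num, den)`; rational arithmetic is shown computable for it by passing to
triples of naturals.
-/

open Encodable Denumerable

theorem Computable.of_graph {α β : Type*} [Primcodable α] [Primcodable β] {f : α → β}
    {p : α → β → Prop} [∀ a b, Decidable (p a b)] (hp : Computable₂ fun a b => decide (p a b))
    (hpf : ∀ a b, p a b ↔ b = f a) : Computable f := by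
  let search : α → ℕ → Option β := fun a k =>
    (decode (α := β) k).bind fun b => if p a b then some b else none
  have hsearch : Computable₂ search :=
    Computable.option_bind (Computable.decode.comp Computable.snd)
      (Computable.cond (hp.comp (Computable.fst.comp Computable.fst) Computable.snd)
        (Computable.option_some.comp Computable.snd) (Computable.const none)).to₂
      |>.of_eq fun ⟨a, k⟩ => by
        simp only [search]; congr; funext b; by_cases h : p a b <;> simp [h]
  have hsound : ∀ a k b, b ∈ search a k → b = f a := by
    intro a k b hb
    simp only [search, Option.mem_def, Option.bind_eq_some_iff, Option.ite_none_right_eq_some] at hb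
    obtain ⟨_, -, hpb, ⟨⟩⟩ := hb
    exact (hpf a b).1 hpb
  refine Partrec.of_eq_tot (Partrec.rfindOpt hsearch) fun a => ?_
  have hdom : (Nat.rfindOpt (search a)).Dom :=
    Nat.rfindOpt_dom.2 ⟨encode (f a), f a, by simp [search, encodek, (hpf a (f a)).2 rfl]⟩
  obtain ⟨k, hk⟩ := Nat.rfindOpt_spec (Part.get_mem hdom)
  simpa [hsound a k _ hk] using Part.get_mem hdom

theorem Computable₂.of_fintype {α β σ : Type*} [Primcodable α] [Fintype α] [Primcodable β]
    [Primcodable σ] {f : α → β → σ} (hf : ∀ a, Computable (f a)) : Computable₂ f := by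
  let e := Fintype.equivFin α
  have h : Computable₂ fun a b => (List.Vector.ofFn fun i => f (e.symm i) b).get (e a) :=
    Computable.vector_get.comp (Computable.vector_ofFn fun i => (hf _).comp Computable.snd)
      ((Primrec.dom_finite e).to_comp.comp Computable.fst)
  exact h.of_eq fun p => by simp [e]

theorem Computable.finset_prod_range {α M : Type*} [Primcodable α] [CommMonoid M] [Primcodable M]
    (hmul : Computable₂ ((· * ·) : M → M → M)) {n : α → ℕ} {g : α → ℕ → M}
    (hn : Computable n) (hg : Computable₂ g) :
    Computable fun a => ∏ k ∈ Finset.range (n a), g a k := by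
  refine (Computable.nat_rec hn (Computable.const 1)
    (hmul.comp (Computable.snd.comp Computable.snd)
      (hg.comp Computable.fst (Computable.fst.comp Computable.snd))).to₂).of_eq fun a => ?_
  induction n a with
  | zero => rfl
  | succ m ih => rw [Finset.prod_range_succ, ← ih]

def Nat.gcdStep (p : ℕ × ℕ) : ℕ × ℕ := if p.1 = 0 then p else (p.2 % p.1, p.1)

theorem Nat.gcdStep_iterate (p : ℕ × ℕ) {n : ℕ} (hn : p.1 ≤ n) :
    (Nat.gcdStep^[n] p).2 = Nat.gcd p.1 p.2 := by
  induction n generalizing p with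
  | zero => simp [Nat.le_zero.mp hn]
  | succ n ih =>
    rw [Function.iterate_succ_apply, Nat.gcdStep]
    split_ifs with h0
    · rw [ih p (by omega)]
    · have := Nat.mod_lt p.2 (Nat.pos_of_ne_zero h0)
      rw [ih _ (by dsimp only; omega), ← Nat.gcd_rec]

theorem Primrec.nat_gcd : Primrec₂ Nat.gcd := by
  have hstep : Primrec Nat.gcdStep :=
    Primrec.ite (Primrec.eq.comp Primrec.fst (Primrec.const 0)) Primrec.id
      (Primrec.pair (Primrec.nat_mod.comp Primrec.snd Primrec.fst) Primrec.fst)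
  exact (Primrec.snd.comp (Primrec.nat_iterate Primrec.fst Primrec.id
    (hstep.comp Primrec.snd).to₂)).of_eq fun p => Nat.gcdStep_iterate p le_rfl

theorem Int.encode_natCast (n : ℕ) : encode (n : ℤ) = 2 * n := rfl
theorem Int.encode_negSucc (n : ℕ) : encode (Int.negSucc n) = 2 * n + 1 := rfl

theorem Primrec.int_toNat : Primrec Int.toNat :=
  (Primrec.ite (Primrec.eq.comp (Primrec.nat_mod.comp .id (.const 2)) (.const 0))
    (Primrec.nat_div.comp .id (.const 2)) (.const 0) |>.comp Primrec.encode).of_eq fun z => by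
    rcases z with n | n
    · simp [Int.encode_natCast]
    · simp [Int.encode_negSucc, Nat.add_mod]

theorem Primrec.int_neg_toNat : Primrec fun z : ℤ => (-z).toNat :=
  (Primrec.ite (Primrec.eq.comp (Primrec.nat_mod.comp .id (.const 2)) (.const 0)) (.const 0)
    (Primrec.succ.comp (Primrec.nat_div.comp .id (.const 2))) |>.comp Primrec.encode).of_eq
    fun z => by
    rcases z with n | n
    · simp [Int.encode_natCast]
    · show (if (2 * n + 1) % 2 = 0 then 0 else (2 * n + 1) / 2 + 1) = _
      rw [Int.neg_negSucc]
      split_ifs <;> omega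

theorem Primrec.int_natAbs : Primrec Int.natAbs :=
  (Primrec.nat_add.comp Primrec.int_toNat Primrec.int_neg_toNat).of_eq
    Int.toNat_add_toNat_neg_eq_natAbs

def IsReducedFrac (p : ℤ × ℕ) : Prop := 0 < p.2 ∧ p.1.natAbs.Coprime p.2

instance : DecidablePred IsReducedFrac := fun _ => inferInstanceAs (Decidable (_ ∧ _))

theorem primrecPred_isReducedFrac : PrimrecPred IsReducedFrac :=
  ⟨inferInstance, PrimrecPred.decide <| PrimrecPred.and
    (Primrec.nat_lt.comp (.const 0) Primrec.snd)
    (Primrec.eq.comp (Primrec.nat_gcd.comp (Primrec.int_natAbs.comp Primrec.fst) Primrec.snd)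
      (.const 1))⟩

/-- Here `encode : ℚ → ℕ` is the `Encodable ℚ` code `encode (q.num, q.den)`. The `Primcodable ℚ`
code comes from `Denumerable ℚ` and is the rank of this one in its range
(`Rat.encode_primcodable`). -/
theorem mem_range_encode_rat_iff (m : ℕ) :
    m ∈ Set.range (encode : ℚ → ℕ) ↔ IsReducedFrac (ofNat (ℤ × ℕ) m) := by
  constructor
  · rintro ⟨y, rfl⟩
    show IsReducedFrac (ofNat (ℤ × ℕ) (encode (y.num, y.den)))
    rw [ofNat_encode]
    exact ⟨y.pos, y.reduced⟩
  · intro ⟨hpos, hcop⟩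
    refine ⟨⟨_, _, hpos.ne', hcop⟩, ?_⟩
    show encode (ofNat (ℤ × ℕ) m) = m
    exact encode_ofNat m

def fracRank (m : ℕ) : ℕ := (List.range m).countP fun j => IsReducedFrac (ofNat (ℤ × ℕ) j)

theorem fracRank_succ (m : ℕ) : fracRank (m + 1) =
    if IsReducedFrac (ofNat (ℤ × ℕ) m) then fracRank m + 1 else fracRank m := by
  simp only [fracRank, List.range_succ, List.countP_append]
  by_cases h : IsReducedFrac (ofNat (ℤ × ℕ) m) <;>
    simp only [h, List.countP_singleton, decide_true, decide_false, if_true, if_false,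
      Bool.false_eq_true, add_zero]

theorem primrec_fracRank : Primrec fracRank := by
  have hstep : Primrec₂ fun m r : ℕ => if IsReducedFrac (ofNat (ℤ × ℕ) m) then r + 1 else r :=
    Primrec.ite ((primrecPred_isReducedFrac.comp (Primrec.ofNat (ℤ × ℕ))).comp Primrec.fst)
      (Primrec.succ.comp Primrec.snd) Primrec.snd
  refine (Primrec.nat_rec₁ 0 hstep).of_eq fun m => ?_
  induction m with
  | zero => rfl
  | succ m ih => rw [fracRank_succ, ← ih]

theorem strictMonoOn_fracRank :
    StrictMonoOn fracRank {m | IsReducedFrac (ofNat (ℤ × ℕ) m)} := by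
  intro a (ha : IsReducedFrac _) b _ hab
  calc fracRank a < fracRank (a + 1) := by rw [fracRank_succ, if_pos ha]; omega
    _ ≤ fracRank b := (List.range_sublist.2 hab).countP_le

theorem Rat.encode_primcodable (y : ℚ) :
    @encode ℚ Primcodable.toEncodable y = fracRank (encode (y.num, y.den)) :=
  List.countP_congr fun m _ => by simp only [mem_range_encode_rat_iff]

theorem Computable.rat_num_den : Computable fun y : ℚ => (y.num, y.den) := by
  refine Computable.of_graph (p := fun y p =>
    IsReducedFrac p ∧ fracRank (encode p) = @encode ℚ Primcodable.toEncodable y) ?_ ?_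
  · exact (PrimrecPred.and (primrecPred_isReducedFrac.comp Primrec.snd)
      (Primrec.eq.comp (primrec_fracRank.comp (Primrec.encode.comp Primrec.snd))
        (Primrec.encode.comp Primrec.fst))).decide.to_comp
  · intro y p
    constructor
    · rintro ⟨hp, hrank⟩
      have hy : IsReducedFrac (y.num, y.den) := ⟨y.pos, y.reduced⟩
      rw [Rat.encode_primcodable] at hrank
      refine encode_injective (strictMonoOn_fracRank.injOn ?_ ?_ hrank)
      · show IsReducedFrac _; rwa [ofNat_encode]
      · show IsReducedFrac _; rwa [ofNat_encode]
    · rintro rfl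
      exact ⟨⟨y.pos, y.reduced⟩, (Rat.encode_primcodable y).symm⟩

/-- `(a, b, c)` stands for the rational `(a - b) / (c + 1)`; the shifted denominator is never
zero, so no junk value of division enters the arithmetic. -/
abbrev NatFrac := ℕ × ℕ × ℕ

namespace NatFrac

def val (t : NatFrac) : ℚ := ((t.1 : ℚ) - t.2.1) / (t.2.2 + 1)

def ofRat (y : ℚ) : NatFrac := (y.num.toNat, (-y.num).toNat, y.den - 1)

def mul (t u : NatFrac) : NatFrac :=
  (t.1 * u.1 + t.2.1 * u.2.1, t.1 * u.2.1 + t.2.1 * u.1, t.2.2 * u.2.2 + t.2.2 + u.2.2)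

def sub (t u : NatFrac) : NatFrac :=
  (t.1 * (u.2.2 + 1) + u.2.1 * (t.2.2 + 1), t.2.1 * (u.2.2 + 1) + u.1 * (t.2.2 + 1),
    t.2.2 * u.2.2 + t.2.2 + u.2.2)

theorem val_ofRat (y : ℚ) : val (ofRat y) = y := by
  have hnum : ((y.num.toNat : ℤ) : ℚ) - ((-y.num).toNat : ℤ) = y.num := by
    exact_mod_cast congrArg (Int.cast (R := ℚ)) (Int.toNat_sub_toNat_neg y.num)
  have hden : ((y.den - 1 : ℕ) : ℚ) + 1 = y.den := by
    rw [Nat.cast_sub y.pos, Nat.cast_one, sub_add_cancel]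
  rw [val, ofRat]
  push_cast at hnum ⊢
  rw [hnum, hden, Rat.num_div_den]

theorem val_mul (t u : NatFrac) : val (mul t u) = val t * val u := by
  simp only [val, mul]
  rw [div_mul_div_comm]
  push_cast
  ring

theorem val_sub (t u : NatFrac) : val (sub t u) = val t - val u := by
  simp only [val, sub]
  rw [div_sub_div _ _ (by positivity) (by positivity)]
  push_cast
  ring

theorem val_eq_zero_iff (t : NatFrac) : val t = 0 ↔ t.1 = t.2.1 := by
  rw [val, div_eq_zero_iff, sub_eq_zero, Nat.cast_inj]
  simp only [or_iff_left_iff_imp]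
  intro h
  exact absurd h (by positivity)

theorem primrec_mul : Primrec₂ mul := by
  have a : Primrec fun p : NatFrac × NatFrac => p.1.1 := Primrec.fst.comp Primrec.fst
  have b : Primrec fun p : NatFrac × NatFrac => p.1.2.1 :=
    Primrec.fst.comp (Primrec.snd.comp Primrec.fst)
  have c : Primrec fun p : NatFrac × NatFrac => p.1.2.2 :=
    Primrec.snd.comp (Primrec.snd.comp Primrec.fst)
  have a' : Primrec fun p : NatFrac × NatFrac => p.2.1 := Primrec.fst.comp Primrec.snd
  have b' : Primrec fun p : NatFrac × NatFrac => p.2.2.1 :=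
    Primrec.fst.comp (Primrec.snd.comp Primrec.snd)
  have c' : Primrec fun p : NatFrac × NatFrac => p.2.2.2 :=
    Primrec.snd.comp (Primrec.snd.comp Primrec.snd)
  exact Primrec.pair (Primrec.nat_add.comp (Primrec.nat_mul.comp a a') (Primrec.nat_mul.comp b b'))
    (Primrec.pair (Primrec.nat_add.comp (Primrec.nat_mul.comp a b') (Primrec.nat_mul.comp b a'))
      (Primrec.nat_add.comp (Primrec.nat_add.comp (Primrec.nat_mul.comp c c') c) c'))

theorem primrec_sub : Primrec₂ sub := by
  have a : Primrec fun p : NatFrac × NatFrac => p.1.1 := Primrec.fst.comp Primrec.fst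
  have b : Primrec fun p : NatFrac × NatFrac => p.1.2.1 :=
    Primrec.fst.comp (Primrec.snd.comp Primrec.fst)
  have c : Primrec fun p : NatFrac × NatFrac => p.1.2.2 :=
    Primrec.snd.comp (Primrec.snd.comp Primrec.fst)
  have a' : Primrec fun p : NatFrac × NatFrac => p.2.1 := Primrec.fst.comp Primrec.snd
  have b' : Primrec fun p : NatFrac × NatFrac => p.2.2.1 :=
    Primrec.fst.comp (Primrec.snd.comp Primrec.snd)
  have c' : Primrec fun p : NatFrac × NatFrac => p.2.2.2 :=
    Primrec.snd.comp (Primrec.snd.comp Primrec.snd)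
  exact Primrec.pair
    (Primrec.nat_add.comp (Primrec.nat_mul.comp a (Primrec.succ.comp c'))
      (Primrec.nat_mul.comp b' (Primrec.succ.comp c)))
    (Primrec.pair
      (Primrec.nat_add.comp (Primrec.nat_mul.comp b (Primrec.succ.comp c'))
        (Primrec.nat_mul.comp a' (Primrec.succ.comp c)))
      (Primrec.nat_add.comp (Primrec.nat_add.comp (Primrec.nat_mul.comp c c') c) c'))

theorem computable_ofRat : Computable ofRat := by
  have h : Primrec fun p : ℤ × ℕ => ((p.1.toNat, (-p.1).toNat, p.2 - 1) : NatFrac) :=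
    Primrec.pair (Primrec.int_toNat.comp Primrec.fst)
      (Primrec.pair (Primrec.int_neg_toNat.comp Primrec.fst)
        (Primrec.nat_sub.comp Primrec.snd (Primrec.const 1)))
  exact (h.to_comp.comp Computable.rat_num_den).of_eq fun _ => rfl

theorem computable_val : Computable val := by
  have h : Primrec₂ fun s t : NatFrac => decide ((sub s t).1 = (sub s t).2.1) :=
    (Primrec.eq.comp (Primrec.fst.comp primrec_sub)
      (Primrec.fst.comp (Primrec.snd.comp primrec_sub))).decide
  refine Computable.of_graph (p := fun t y => (sub (ofRat y) t).1 = (sub (ofRat y) t).2.1)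
    (h.to_comp.comp (computable_ofRat.comp Computable.snd) Computable.fst) fun t y => ?_
  rw [← val_eq_zero_iff, val_sub, val_ofRat, sub_eq_zero]

end NatFrac

theorem Computable.rat_mul : Computable₂ ((· * ·) : ℚ → ℚ → ℚ) :=
  (NatFrac.computable_val.comp (NatFrac.primrec_mul.to_comp.comp
    (NatFrac.computable_ofRat.comp Computable.fst)
    (NatFrac.computable_ofRat.comp Computable.snd))).of_eq
    fun p => by simp [NatFrac.val_mul, NatFrac.val_ofRat]

theorem Computable.rat_sub : Computable₂ ((· - ·) : ℚ → ℚ → ℚ) :=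
  (NatFrac.computable_val.comp (NatFrac.primrec_sub.to_comp.comp
    (NatFrac.computable_ofRat.comp Computable.fst)
    (NatFrac.computable_ofRat.comp Computable.snd))).of_eq
    fun p => by simp [NatFrac.val_sub, NatFrac.val_ofRat]

theorem Computable.rat_natCast : Computable (Nat.cast : ℕ → ℚ) :=
  (NatFrac.computable_val.comp (Primrec.pair .id (.const (0, 0))).to_comp).of_eq
    fun n => by simp [NatFrac.val]

theorem List.take_add_one_eq_append_getD {X : Type*} {s : List X} {k : ℕ} (hk : k < s.length)
    (x₀ : X) : s.take (k + 1) = s.take k ++ [s.getD k x₀] := by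
  rw [List.getD_eq_getElem _ _ hk, List.take_concat_get']

theorem List.eq_mul_prod_range_take {X M : Type*} [CommMonoid M] {F : List X → M}
    {h : List X → List X → M} (hF : ∀ s x, F (s ++ [x]) = F s * h s (s ++ [x])) (s : List X) :
    F s = F [] * ∏ k ∈ Finset.range s.length, h (s.take k) (s.take (k + 1)) := by
  induction s using List.reverseRecOn with
  | nil => simp
  | append_singleton s x ih =>
    rw [hF, ih, List.length_append, List.length_singleton, Finset.prod_range_succ, mul_assoc,
      List.take_left' rfl, List.take_of_length_le (by simp)]
    congr 2
    refine Finset.prod_congr rfl fun k hk => ?_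
    have hk := Finset.mem_range.1 hk
    rw [List.take_append_of_le_length hk.le, List.take_append_of_le_length hk]

theorem abs_sub_take_le {X : Type*} {M : List X → ℝ} {B : ℝ}
    (hM : ∀ s x, |M (s ++ [x]) - M s| ≤ B) (s : List X) {k : ℕ} (hk : k < s.length) :
    |M (s.take (k + 1)) - M (s.take k)| ≤ B := by
  rw [← List.take_concat_get' s k hk]
  exact hM _ _

theorem Real.exp_neg_sub_sq_le_one_sub {t : ℝ} (ht : |t| ≤ 1 / 2) :
    Real.exp (-t - t ^ 2) ≤ 1 - t := by
  obtain ⟨h1, h2⟩ := abs_le.1 ht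
  suffices 1 ≤ (1 - t) * Real.exp (t + t ^ 2) by
    rw [show -t - t ^ 2 = -(t + t ^ 2) by ring, Real.exp_neg]
    exact (inv_le_iff_one_le_mul₀ (Real.exp_pos _)).2 (by linarith)
  rcases le_total t 0 with h0 | h0
  · nlinarith [Real.add_one_le_exp (t + t ^ 2)]
  · have hq := Real.quadratic_le_exp_of_nonneg (by positivity : (0 : ℝ) ≤ t + t ^ 2)
    nlinarith [mul_le_mul_of_nonneg_left hq (by linarith : (0 : ℝ) ≤ 1 - t),
      mul_nonneg (mul_nonneg h0 h0) h0, mul_nonneg (mul_nonneg h0 h0) (mul_nonneg h0 h0)]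

theorem Real.exp_sum_neg_sub_sq_le_prod_one_sub {ι : Type*} (s : Finset ι) {t : ι → ℝ}
    (ht : ∀ i ∈ s, |t i| ≤ 1 / 2) :
    Real.exp (∑ i ∈ s, (-t i - t i ^ 2)) ≤ ∏ i ∈ s, (1 - t i) := by
  rw [Real.exp_sum]
  exact Finset.prod_le_prod (fun i _ => (Real.exp_pos _).le)
    fun i hi => Real.exp_neg_sub_sq_le_one_sub (ht i hi)

theorem abs_prod_range_sub_prod_range_le {L : ℕ} {f g : ℕ → ℝ} {A δ : ℝ} (hA : 1 ≤ A)
    (hf : ∀ k < L, |f k| ≤ A) (hg : ∀ k < L, |g k| ≤ A) (hfg : ∀ k < L, |f k - g k| ≤ δ) :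
    |∏ k ∈ Finset.range L, f k - ∏ k ∈ Finset.range L, g k| ≤ L * A ^ L * δ := by
  induction L with
  | zero => simp
  | succ n ih =>
    have ih := ih (fun k hk => hf k (by omega)) (fun k hk => hg k (by omega))
      (fun k hk => hfg k (by omega))
    have hgn : |∏ k ∈ Finset.range n, g k| ≤ A ^ n := by
      rw [Finset.abs_prod]
      refine (Finset.prod_le_prod (fun _ _ => abs_nonneg _) fun k hk => hg k ?_).trans_eq ?_
      · simp only [Finset.mem_range] at hk; omega
      · simp
    have hδ : 0 ≤ δ := (abs_nonneg _).trans (hfg n n.lt_succ_self)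
    rw [Finset.prod_range_succ, Finset.prod_range_succ,
      show ∀ a b c d : ℝ, a * b - c * d = (a - c) * b + c * (b - d) by intros; ring]
    calc _ ≤ (n * A ^ n * δ) * A + A ^ n * δ := by
          refine (abs_add_le _ _).trans (add_le_add ?_ ?_) <;> rw [abs_mul]
          · exact mul_le_mul ih (hf n n.lt_succ_self) (abs_nonneg _) (by positivity)
          · exact mul_le_mul hgn (hfg n n.lt_succ_self) (abs_nonneg _) (by positivity)
      _ ≤ (n + 1 : ℕ) * A ^ (n + 1) * δ := by
          push_cast
          rw [pow_succ]
          nlinarith [mul_nonneg (mul_nonneg (pow_nonneg (zero_le_one.trans hA) n) hδ)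
            (sub_nonneg.2 hA)]

theorem abs_mul_mul_le_mul {ξ σ d B : ℝ} (hξ : 0 ≤ ξ) (hσ0 : 0 ≤ σ) (hσ1 : σ ≤ 1) (hd : |d| ≤ B) :
    |ξ * σ * d| ≤ ξ * B := by
  rw [abs_mul, abs_mul, abs_of_nonneg hξ, abs_of_nonneg hσ0, mul_assoc]
  exact mul_le_mul_of_nonneg_left (by nlinarith [abs_nonneg d]) hξ

theorem abs_mul_sub_mul_le {q ξ r d B δ : ℝ} (hξ : 0 ≤ ξ) (hd : |d| ≤ B)
    (hq : |q - ξ| ≤ δ) (hr : |r - d| ≤ δ) (hδ : δ ≤ 1) :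
    |q * r - ξ * d| ≤ (B + 1 + ξ) * δ := by
  have hr' : |r| ≤ B + 1 := by
    calc |r| = |d + (r - d)| := by ring_nf
      _ ≤ B + 1 := (abs_add_le _ _).trans (by linarith)
  calc |q * r - ξ * d| = |(q - ξ) * r + ξ * (r - d)| := by ring_nf
    _ ≤ |q - ξ| * |r| + ξ * |r - d| := by
        rw [← abs_of_nonneg hξ, ← abs_mul, ← abs_mul, abs_of_nonneg hξ]; exact abs_add_le _ _
    _ ≤ δ * (B + 1) + ξ * δ := by have := (abs_nonneg _).trans hq; gcongr
    _ = (B + 1 + ξ) * δ := by ring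

theorem isSupermartingale_of_procDiff_eq_neg_mul {X : Type} [Fintype X] [Nonempty X]
    {Φ : List X → (X → ℝ) → ℝ} (hΦ : ∀ s, IsCoherent (Φ s)) {F M : List X → ℝ}
    (hM : ∀ s, 0 ≤ Φ s (procDiff M s)) {α : List X → ℝ} (hα : ∀ s, 0 ≤ α s)
    (hF : ∀ s x, procDiff F s x = -(α s * procDiff M s x)) :
    IsSupermartingale Φ F := by
  intro s
  have hneg : (fun x => -procDiff F s x) = fun x => α s * procDiff M s x := by
    funext x; rw [hF, neg_neg]
  rw [upperE, hneg, (hΦ s).2.1 _ _ (hα s), neg_nonpos]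
  exact mul_nonneg (hα s) (hM s)

theorem le_neg_mul_of_ite_div_le {a T ε : ℝ} (hε : 0 < ε)
    (h : (if 0 < T then a / T else 0) ≤ -ε) : a ≤ -ε * T := by
  split_ifs at h with hT
  · rwa [div_le_iff₀ hT] at h
  · linarith

theorem exp_le_prod_one_sub_of_sum_le {L : ℕ} {σ d : ℕ → ℝ} {B ε : ℝ} (hB : 0 < B) (hε : 0 < ε)
    (hεB : ε < B) (hσ : ∀ k, 0 ≤ σ k ∧ σ k ≤ 1) (hd : ∀ k < L, |d k| ≤ B)
    (hsum : ∑ k ∈ Finset.range L, σ k * d k ≤ -ε * ∑ k ∈ Finset.range L, σ k) :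
    Real.exp (ε ^ 2 / (4 * B ^ 2) * ∑ k ∈ Finset.range L, σ k) ≤
      ∏ k ∈ Finset.range L, (1 - ε / (2 * B ^ 2) * σ k * d k) := by
  set ξ := ε / (2 * B ^ 2) with hξ
  have hξ0 : 0 ≤ ξ := by positivity
  have hξB : ξ * B ≤ 1 / 2 := by
    rw [hξ, div_mul_eq_mul_div, div_le_div_iff₀ (by positivity) two_pos]; nlinarith
  have hsq : ∀ k < L, (σ k * d k) ^ 2 ≤ B ^ 2 * σ k := fun k hk => by
    have := sq_le_sq' (abs_le.1 (hd k hk)).1 (abs_le.1 (hd k hk)).2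
    nlinarith [hσ k, mul_nonneg (hσ k).1 (sub_nonneg.2 (hσ k).2), sq_nonneg (d k)]
  calc Real.exp (ε ^ 2 / (4 * B ^ 2) * ∑ k ∈ Finset.range L, σ k)
      ≤ Real.exp (∑ k ∈ Finset.range L, (-(ξ * σ k * d k) - (ξ * σ k * d k) ^ 2)) := by
        gcongr
        have hsq' := Finset.sum_le_sum fun k hk => hsq k (Finset.mem_range.1 hk)
        rw [← Finset.mul_sum] at hsq'
        have hcoef : ξ * ε - ξ ^ 2 * B ^ 2 = ε ^ 2 / (4 * B ^ 2) := by
          rw [hξ]; field_simp; ring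
        have hexpand : ∑ k ∈ Finset.range L, (-(ξ * σ k * d k) - (ξ * σ k * d k) ^ 2) =
            -ξ * ∑ k ∈ Finset.range L, σ k * d k -
              ξ ^ 2 * ∑ k ∈ Finset.range L, (σ k * d k) ^ 2 := by
          rw [Finset.mul_sum, Finset.mul_sum, ← Finset.sum_sub_distrib]
          exact Finset.sum_congr rfl fun k _ => by ring
        rw [hexpand, ← hcoef]
        nlinarith [mul_le_mul_of_nonneg_left hsum hξ0, mul_le_mul_of_nonneg_left hsq' (sq_nonneg ξ)]
    _ ≤ ∏ k ∈ Finset.range L, (1 - ξ * σ k * d k) :=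
        Real.exp_sum_neg_sub_sq_le_prod_one_sub _ fun k hk =>
          (abs_mul_mul_le_mul hξ0 (hσ k).1 (hσ k).2 (hd k (Finset.mem_range.1 hk))).trans hξB

theorem mul_three_pow_mul_two_zpow_le (L C n : ℕ) :
    (L : ℝ) * 3 ^ L * (2 ^ C * 2 ^ (-((n + C + 3 * L : ℕ) : ℤ))) ≤ 2 ^ (-(n : ℤ)) := by
  have hL : (L : ℝ) * 3 ^ L ≤ 2 ^ (3 * L) := by
    rw [pow_mul, show (2 : ℝ) ^ 3 = 2 * 4 by norm_num, mul_pow]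
    gcongr
    · exact_mod_cast Nat.lt_two_pow_self.le
    · norm_num
  have hsplit : (2 : ℝ) ^ (-((n + C + 3 * L : ℕ) : ℤ)) =
      2 ^ (-(n : ℤ)) / (2 ^ C * 2 ^ (3 * L)) := by
    rw [zpow_neg, zpow_neg, zpow_natCast, zpow_natCast, pow_add, pow_add]; field_simp
  rw [hsplit, mul_div_assoc', mul_div_mul_left _ _ (by positivity), mul_div_assoc',
    div_le_iff₀ (by positivity), mul_comm]
  exact mul_le_mul_of_nonneg_left hL (by positivity)

theorem abs_one_sub_mul_mul_le_two {ξ σ d B : ℝ} (hξ : 0 ≤ ξ) (hξB : ξ * B ≤ 1) (hσ0 : 0 ≤ σ)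
    (hσ1 : σ ≤ 1) (hd : |d| ≤ B) : |1 - ξ * σ * d| ≤ 2 := by
  have := abs_mul_mul_le_mul hξ hσ0 hσ1 hd
  calc |1 - ξ * σ * d| ≤ |1| + |ξ * σ * d| := abs_sub _ _
    _ ≤ 2 := by rw [abs_one]; linarith

theorem abs_one_sub_mul_mul_sub_le {ξ σ d q r B δ : ℝ} (hξ : 0 ≤ ξ) (hσ0 : 0 ≤ σ) (hσ1 : σ ≤ 1)
    (hd : |d| ≤ B) (hq : |q - ξ| ≤ δ) (hr : |r - d| ≤ δ) (hδ : δ ≤ 1) :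
    |(1 - ξ * σ * d) - (1 - σ * (q * r))| ≤ (B + 1 + ξ) * δ := by
  calc |(1 - ξ * σ * d) - (1 - σ * (q * r))| = σ * |q * r - ξ * d| := by
        rw [← abs_of_nonneg hσ0, ← abs_mul, abs_of_nonneg hσ0]; ring_nf
    _ ≤ 1 * ((B + 1 + ξ) * δ) :=
        mul_le_mul hσ1 (abs_mul_sub_mul_le hξ hd hq hr hδ) (abs_nonneg _) zero_le_one
    _ = (B + 1 + ξ) * δ := one_mul _

theorem ComputableProcess.prod_one_sub_of_getD {X : Type} [Fintype X] [Primcodable X] (x₀ : X)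
    {ξ B : ℝ} (hξ : 0 ≤ ξ) (hξB : ξ * B ≤ 1) {S : List X → ℕ} (hS : ∀ s, S s ≤ 1)
    {D : X → List X → ℝ} (hD : ∀ x s, |D x s| ≤ B) (hξc : ComputableReal ξ)
    (hSc : Computable S) (hDc : ∀ x, ComputableProcess (D x)) :
    ComputableProcess fun s => ∏ k ∈ Finset.range s.length,
      (1 - ξ * S (s.take k) * D (s.getD k x₀) (s.take k)) := by
  obtain ⟨q, hqc, hq⟩ := hξc
  choose r hrc hr using hDc
  obtain ⟨C, hC⟩ : ∃ C : ℕ, B + 1 + ξ ≤ 2 ^ C :=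
    (pow_unbounded_of_one_lt _ one_lt_two).imp fun _ h => h.le
  -- `prec` makes `|s| · 3^|s| · 2^C · 2^(-prec) ≤ 2^(-n)`: see `mul_three_pow_mul_two_zpow_le`.
  let prec : List X × ℕ → ℕ := fun p => p.2 + C + 3 * p.1.length
  let g : List X × ℕ → ℕ → ℚ := fun p k =>
    1 - S (p.1.take k) * (q (prec p) * r (p.1.getD k x₀) (p.1.take k, prec p))
  refine ⟨fun p => ∏ k ∈ Finset.range p.1.length, g p k, ?_, fun s n N hNn => ?_⟩
  · have htake : Computable fun a : (List X × ℕ) × ℕ => a.1.1.take a.2 :=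
      Primrec.list_take.to_comp.comp Computable.snd (Computable.fst.comp Computable.fst)
    have hprec : Computable fun a : (List X × ℕ) × ℕ => prec a.1 :=
      (Primrec.nat_add.comp (Primrec.nat_add.comp Primrec.snd (Primrec.const C))
        (Primrec.nat_mul.comp (Primrec.const 3) (Primrec.list_length.comp Primrec.fst))).to_comp
        |>.comp Computable.fst
    have hgetD : Computable fun a : (List X × ℕ) × ℕ => a.1.1.getD a.2 x₀ :=
      (Primrec.list_getD x₀).to_comp.comp (Computable.fst.comp Computable.fst) Computable.snd
    have hg : Computable₂ g :=
      Computable.rat_sub.comp (Computable.const 1)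
        (Computable.rat_mul.comp (Computable.rat_natCast.comp (hSc.comp htake))
          (Computable.rat_mul.comp (hqc.comp hprec)
            ((Computable₂.of_fintype hrc).comp hgetD (htake.pair hprec))))
    exact Computable.finset_prod_range Computable.rat_mul
      (Computable.list_length.comp Computable.fst) hg
  set m := prec (s, n)
  set δ : ℝ := 2 ^ (-(m : ℤ))
  have hCδ : 2 ^ C * δ ≤ 1 := by
    rw [← zpow_natCast, ← zpow_add₀ two_ne_zero]
    exact zpow_le_one_of_nonpos₀ one_le_two (by simp only [m, prec]; push_cast; omega)
  have hδ : δ ≤ 1 := (le_mul_of_one_le_left (by positivity) (one_le_pow₀ one_le_two)).trans hCδ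
  set f : ℕ → ℝ := fun k => 1 - ξ * S (s.take k) * D (s.getD k x₀) (s.take k)
  have hσ : ∀ k, 0 ≤ (S (s.take k) : ℝ) ∧ (S (s.take k) : ℝ) ≤ 1 :=
    fun k => ⟨Nat.cast_nonneg _, by exact_mod_cast hS _⟩
  have hf : ∀ k, |f k| ≤ 2 := fun k =>
    abs_one_sub_mul_mul_le_two hξ hξB (hσ k).1 (hσ k).2 (hD _ _)
  have hfg : ∀ k, |f k - g (s, n) k| ≤ (B + 1 + ξ) * δ := fun k => by
    have := abs_one_sub_mul_mul_sub_le hξ (hσ k).1 (hσ k).2 (hD _ _) (hq m)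
      (hr (s.getD k x₀) (s.take k) m m le_rfl) hδ
    simp only [g]; push_cast; exact this
  have hg : ∀ k, |(g (s, n) k : ℝ)| ≤ 3 := fun k => by
    have := abs_sub_abs_le_abs_sub (g (s, n) k : ℝ) (f k)
    rw [abs_sub_comm (g (s, n) k : ℝ)] at this
    linarith [hf k, hfg k, (mul_le_mul_of_nonneg_right hC (by positivity : (0 : ℝ) ≤ δ)).trans hCδ]
  calc |((∏ k ∈ Finset.range s.length, g (s, n) k : ℚ) : ℝ) - ∏ k ∈ Finset.range s.length, f k|
      ≤ s.length * 3 ^ s.length * ((B + 1 + ξ) * δ) := by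
        rw [abs_sub_comm, Rat.cast_prod]
        exact abs_prod_range_sub_prod_range_le (by norm_num)
          (fun k _ => (hf k).trans (by norm_num)) (fun k _ => hg k) (fun k _ => hfg k)
    _ ≤ s.length * 3 ^ s.length * (2 ^ C * δ) := by gcongr
    _ ≤ 2 ^ (-(n : ℤ)) := mul_three_pow_mul_two_zpow_le s.length C n
    _ ≤ 2 ^ (-(N : ℤ)) := zpow_le_zpow_right₀ one_le_two (by omega)

theorem ComputableProcess.prod_one_sub {X : Type} [Fintype X] [Nonempty X] [Primcodable X]
    {ξ B : ℝ} (hξ : 0 ≤ ξ) (hξB : ξ * B ≤ 1) {S : List X → ℕ} (hS : ∀ s, S s ≤ 1)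
    {M : List X → ℝ} (hM : ∀ s x, |M (s ++ [x]) - M s| ≤ B) (hξc : ComputableReal ξ)
    (hSc : Computable S) (hMc : ∀ x, ComputableProcess fun s => M (s ++ [x]) - M s) :
    ComputableProcess fun s => ∏ k ∈ Finset.range s.length,
      (1 - ξ * S (s.take k) * (M (s.take (k + 1)) - M (s.take k))) := by
  obtain ⟨x₀⟩ := ‹Nonempty X›
  convert prod_one_sub_of_getD x₀ hξ hξB hS (fun x s => hM s x) hξc hSc hMc using 1
  funext s
  refine Finset.prod_congr rfl fun k hk => ?_
  rw [List.take_add_one_eq_append_getD (Finset.mem_range.1 hk) x₀]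

/-- Let `B > 0`, `0 < ξ < 1/B`, `S` a selection process, and `M`
a submartingale for `Φ` with `|ΔM| ≤ B`.  Then the process
`F_M(x_{1:n}) = Π_{k<n} (1 − ξ·S(x_{1:k})·ΔM(x_{1:k})(x_{k+1}))` is a positive
supermartingale for `Φ` with `F_M(□) = 1`; if moreover `ξ = ε/(2B²)` with
`0 < ε < B`, then `⟨M⟩_S(x_{1:n}) ≤ −ε` implies
`F_M(x_{1:n}) ≥ exp((ε²/(4B²))·Σ_{k<n} S(x_{1:k}))`; and if `ξ`, `S` and `ΔM`
are computable, then `F_M` is computable. -/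
theorem stmt_17 {X : Type} [Fintype X] [Nonempty X] [Primcodable X]
    (Φ : List X → (X → ℝ) → ℝ) (hΦ : ∀ s, IsCoherent (Φ s))
    (B ξ : ℝ) (hB : 0 < B) (hξ0 : 0 < ξ) (hξB : ξ < 1 / B)
    (S : List X → ℕ) (hS01 : ∀ s, S s = 0 ∨ S s = 1)
    (M : List X → ℝ)
    (hsub : ∀ s : List X, 0 ≤ Φ s (procDiff M s))
    (hbound : ∀ (s : List X) (x : X), |M (s ++ [x]) - M s| ≤ B)
    (F : List X → ℝ) (hF1 : F [] = 1)
    (hFrec : ∀ (s : List X) (x : X),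
      F (s ++ [x]) = F s * (1 - ξ * (S s : ℝ) * (M (s ++ [x]) - M s))) :
    ((∀ s, 0 < F s) ∧ F [] = 1 ∧ IsSupermartingale Φ F) ∧
    (∀ ε : ℝ, 0 < ε → ε < B → ξ = ε / (2 * B ^ 2) →
      ∀ s : List X,
        (if 0 < ∑ k ∈ Finset.range s.length, (S (s.take k) : ℝ) then
            (∑ k ∈ Finset.range s.length,
              (S (s.take k) : ℝ) * (M (s.take (k + 1)) - M (s.take k))) /
            (∑ k ∈ Finset.range s.length, (S (s.take k) : ℝ))
          else 0) ≤ -ε →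
        Real.exp ((ε ^ 2 / (4 * B ^ 2)) *
          ∑ k ∈ Finset.range s.length, (S (s.take k) : ℝ)) ≤ F s) ∧
    (ComputableReal ξ → Computable S →
      (∀ x : X, ComputableProcess (fun s => M (s ++ [x]) - M s)) →
      ComputableProcess F) := by
  have hS1 : ∀ s, S s ≤ 1 := fun s => by rcases hS01 s with h | h <;> omega
  have hξB1 : ξ * B < 1 := by rwa [lt_div_iff₀ hB] at hξB
  have hprod : ∀ s : List X, F s = ∏ k ∈ Finset.range s.length,
      (1 - ξ * S (s.take k) * (M (s.take (k + 1)) - M (s.take k))) := fun s => by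
    simpa [hF1] using List.eq_mul_prod_range_take (h := fun u v => 1 - ξ * S u * (M v - M u))
      hFrec s
  have hpos : ∀ s, 0 < F s := fun s => by
    rw [hprod]
    refine Finset.prod_pos fun k hk => sub_pos.2 ((le_abs_self _).trans_lt ?_)
    exact (abs_mul_mul_le_mul hξ0.le (Nat.cast_nonneg _) (by exact_mod_cast hS1 _)
      (abs_sub_take_le hbound s (Finset.mem_range.1 hk))).trans_lt hξB1
  refine ⟨⟨hpos, hF1, ?_⟩, fun ε hε hεB hξε s hmean => ?_, fun hξc hSc hMc => ?_⟩
  · refine isSupermartingale_of_procDiff_eq_neg_mul hΦ hsub (α := fun s => F s * ξ * S s)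
      (fun s => by have := hpos s; positivity) fun s x => ?_
    simp only [procDiff, hFrec]; ring
  · rw [hprod, hξε]
    exact exp_le_prod_one_sub_of_sum_le hB hε hεB
      (fun k => ⟨Nat.cast_nonneg _, by exact_mod_cast hS1 _⟩) (fun k => abs_sub_take_le hbound s)
      (le_neg_mul_of_ite_div_le hε hmean)
  · rw [funext hprod]
    exact ComputableProcess.prod_one_sub hξ0.le hξB1.le hS1 hbound hξc hSc hMc
end

section
/- Let f be a gamble on X and let γ ∈ ℝ satisfy min f ≤ γ ≤ max f. Define E_{γ,f}(g) := sup{ min_{x∈X}( g(x) − μ·(f(x) − γ) ) : μ ≥ 0 } for all gambles g. Then E_{γ,f} is a coherent lower expectation with E_{γ,f}(f) = γ and conjugate upper expectation value Ē_{γ,f}(f) = max f. Moreover, for every coherent lower expectation E' with γ ≤ E'(f), it holds that E_{γ,f}(g) ≤ E'(g) for all gambles g. -/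
open Filter

/-- The coherent lower expectation `E_{γ,f}`, defined by
`E_{γ,f}(g) = sup{ min_x (g(x) − μ(f(x) − γ)) : μ ≥ 0 }`. -/
noncomputable def lowerGamma {X : Type} [Fintype X] [Nonempty X]
    (f : X → ℝ) (γ : ℝ) (g : X → ℝ) : ℝ :=
  sSup {c : ℝ | ∃ μ : ℝ, 0 ≤ μ ∧
    c = Finset.univ.inf' Finset.univ_nonempty (fun x => g x - μ * (f x - γ))}

/-!
The supremum defining `E_{γ,f}(g)` is finite because every candidate is at most `g(x₁)` at a
maximiser `x₁` of `f`, where the penalty `μ(f(x₁) − γ)` is nonnegative. Each candidate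
`min(g − μ(f − γ))` is superadditive in `(g, μ)` and positively homogeneous, which gives
coherence; `μ = 1` gives `E_{γ,f}(f) ≥ γ`, and evaluating at a minimiser (`μ ≤ 1`) or a
maximiser (`μ ≥ 1`) of `f` gives the reverse. For a coherent `E'` with `E'(f) ≥ γ` the penalty
has `E'(μ(f − γ)) = μ E'(f − γ) ≥ 0`, so superadditivity yields
`E'(g) ≥ E'(g − μ(f − γ)) ≥ min(g − μ(f − γ))` for every `μ ≥ 0`.
-/

open Finset

section CoherentLowerExpectation

variable {X : Type} [Fintype X] [Nonempty X] {E : (X → ℝ) → ℝ}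

theorem IsCoherent.sub_const_le (hE : IsCoherent E) (h : X → ℝ) (c : ℝ) :
    E h - c ≤ E (fun x => h x - c) := by
  have hc : -c ≤ E (fun _ => -c) := by simpa using hE.1 (fun _ => -c)
  simpa [sub_eq_add_neg] using (add_le_add_right hc (E h)).trans (hE.2.2 h fun _ => -c)

theorem IsCoherent.apply_sub_add_le (hE : IsCoherent E) (g h : X → ℝ) :
    E (fun x => g x - h x) + E h ≤ E g := by
  simpa using hE.2.2 (fun x => g x - h x) h

end CoherentLowerExpectation

section LowerGamma

variable {X : Type} [Fintype X] [Nonempty X] {f : X → ℝ} {γ : ℝ}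

theorem lowerGamma_le {g : X → ℝ} {b : ℝ}
    (hb : ∀ μ : ℝ, 0 ≤ μ → univ.inf' univ_nonempty (fun x => g x - μ * (f x - γ)) ≤ b) :
    lowerGamma f γ g ≤ b :=
  csSup_le ⟨_, 0, le_rfl, rfl⟩ (by rintro _ ⟨μ, hμ, rfl⟩; exact hb μ hμ)

theorem lowerGamma_le_apply {x : X} (hx : γ ≤ f x) (g : X → ℝ) : lowerGamma f γ g ≤ g x :=
  lowerGamma_le fun μ hμ => inf'_le_of_le _ (mem_univ x) (by nlinarith)

theorem inf'_sub_mul_le_lowerGamma (hmax : γ ≤ univ.sup' univ_nonempty f) (g : X → ℝ)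
    {μ : ℝ} (hμ : 0 ≤ μ) :
    univ.inf' univ_nonempty (fun x => g x - μ * (f x - γ)) ≤ lowerGamma f γ g := by
  obtain ⟨x₁, -, hx₁⟩ := exists_mem_eq_sup' univ_nonempty f
  refine le_csSup ⟨g x₁, ?_⟩ ⟨μ, hμ, rfl⟩
  rintro _ ⟨ν, hν, rfl⟩
  exact inf'_le_of_le _ (mem_univ x₁) (by nlinarith)

theorem inf'_le_lowerGamma (hmax : γ ≤ univ.sup' univ_nonempty f) (g : X → ℝ) :
    univ.inf' univ_nonempty g ≤ lowerGamma f γ g := by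
  simpa using inf'_sub_mul_le_lowerGamma hmax g le_rfl

theorem lowerGamma_add_le (hmax : γ ≤ univ.sup' univ_nonempty f) (g h : X → ℝ) :
    lowerGamma f γ g + lowerGamma f γ h ≤ lowerGamma f γ (fun x => g x + h x) := by
  suffices ∀ μ ν : ℝ, 0 ≤ μ → 0 ≤ ν →
      univ.inf' univ_nonempty (fun x => g x - μ * (f x - γ)) +
        univ.inf' univ_nonempty (fun x => h x - ν * (f x - γ)) ≤
      lowerGamma f γ (fun x => g x + h x) by
    rw [← le_sub_iff_add_le]
    refine lowerGamma_le fun μ hμ => ?_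
    rw [le_sub_comm]
    exact lowerGamma_le fun ν hν => le_sub_iff_add_le'.mpr (this μ ν hμ hν)
  intro μ ν hμ hν
  refine le_trans ?_ (inf'_sub_mul_le_lowerGamma hmax _ (add_nonneg hμ hν))
  refine le_inf' _ _ fun x _ => ?_
  have hg := inf'_le (fun x => g x - μ * (f x - γ)) (mem_univ x)
  have hh := inf'_le (fun x => h x - ν * (f x - γ)) (mem_univ x)
  linarith

theorem mul_lowerGamma_le (hmax : γ ≤ univ.sup' univ_nonempty f) (g : X → ℝ) {α : ℝ}
    (hα : 0 < α) :
    α * lowerGamma f γ g ≤ lowerGamma f γ (fun x => α * g x) := by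
  rw [mul_comm, ← le_div_iff₀ hα]
  refine lowerGamma_le fun μ hμ => (le_div_iff₀ hα).mpr ?_
  refine le_trans ?_ (inf'_sub_mul_le_lowerGamma hmax _ (mul_nonneg hα.le hμ))
  refine le_inf' _ _ fun x _ => ?_
  have := mul_le_mul_of_nonneg_left (inf'_le (fun x => g x - μ * (f x - γ)) (mem_univ x)) hα.le
  linarith

theorem lowerGamma_mul (hmax : γ ≤ univ.sup' univ_nonempty f) (g : X → ℝ) {α : ℝ}
    (hα : 0 ≤ α) :
    lowerGamma f γ (fun x => α * g x) = α * lowerGamma f γ g := by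
  obtain ⟨x₁, -, hx₁⟩ := exists_mem_eq_sup' univ_nonempty f
  rcases hα.eq_or_lt with rfl | hα
  · refine le_antisymm ?_ ?_
    · simpa using lowerGamma_le_apply (hx₁ ▸ hmax) (fun x => 0 * g x)
    · simpa using inf'_le_lowerGamma hmax (fun x => 0 * g x)
  refine le_antisymm ?_ (mul_lowerGamma_le hmax g hα)
  -- the reverse inequality is `mul_lowerGamma_le` for `α⁻¹` applied to `α • g`
  have := mul_lowerGamma_le hmax (fun x => α * g x) (inv_pos.mpr hα)
  simp only [inv_mul_cancel_left₀ hα.ne'] at this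
  rwa [inv_mul_le_iff₀ hα] at this

theorem isCoherent_lowerGamma (hmax : γ ≤ univ.sup' univ_nonempty f) :
    IsCoherent (lowerGamma f γ) :=
  ⟨inf'_le_lowerGamma hmax, fun g _ hα => lowerGamma_mul hmax g hα, lowerGamma_add_le hmax⟩

theorem lowerGamma_self (hmin : univ.inf' univ_nonempty f ≤ γ)
    (hmax : γ ≤ univ.sup' univ_nonempty f) : lowerGamma f γ f = γ := by
  obtain ⟨x₀, -, hx₀⟩ := exists_mem_eq_inf' univ_nonempty f
  obtain ⟨x₁, -, hx₁⟩ := exists_mem_eq_sup' univ_nonempty f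
  refine le_antisymm (lowerGamma_le fun μ hμ => ?_) ?_
  · rcases le_total μ 1 with hμ1 | hμ1
    · exact inf'_le_of_le _ (mem_univ x₀) (by nlinarith)
    · exact inf'_le_of_le _ (mem_univ x₁) (by nlinarith)
  · simpa using inf'_sub_mul_le_lowerGamma hmax f zero_le_one

theorem upperE_lowerGamma_self (hmax : γ ≤ univ.sup' univ_nonempty f) :
    upperE (lowerGamma f γ) f = univ.sup' univ_nonempty f := by
  obtain ⟨x₁, -, hx₁⟩ := exists_mem_eq_sup' univ_nonempty f
  have hmin : -f x₁ ≤ univ.inf' univ_nonempty (fun x => -f x) :=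
    le_inf' _ _ fun x _ => neg_le_neg (hx₁ ▸ le_sup' f (mem_univ x))
  rw [upperE, hx₁, neg_eq_iff_eq_neg]
  exact le_antisymm (lowerGamma_le_apply (hx₁ ▸ hmax) _)
    (hmin.trans (inf'_le_lowerGamma hmax _))

theorem lowerGamma_le_of_isCoherent {E : (X → ℝ) → ℝ} (hE : IsCoherent E) (hγ : γ ≤ E f)
    (g : X → ℝ) : lowerGamma f γ g ≤ E g := by
  refine lowerGamma_le fun μ hμ => ?_
  have hpenalty : 0 ≤ E (fun x => μ * (f x - γ)) := by
    rw [hE.2.1 _ _ hμ]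
    exact mul_nonneg hμ (by linarith [hE.sub_const_le f γ])
  linarith [hE.1 (fun x => g x - μ * (f x - γ)), hE.apply_sub_add_le g (fun x => μ * (f x - γ))]

end LowerGamma

/-- For a gamble `f` and `min f ≤ γ ≤ max f`, `E_{γ,f}` is a
coherent lower expectation with `E_{γ,f}(f) = γ` and `Ē_{γ,f}(f) = max f`, and
it is dominated by every coherent lower expectation `E'` with `γ ≤ E'(f)`. -/
theorem stmt_18 {X : Type} [Fintype X] [Nonempty X]
    (f : X → ℝ) (γ : ℝ)
    (h1 : Finset.univ.inf' Finset.univ_nonempty f ≤ γ)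
    (h2 : γ ≤ Finset.univ.sup' Finset.univ_nonempty f) :
    IsCoherent (lowerGamma f γ) ∧
    lowerGamma f γ f = γ ∧
    upperE (lowerGamma f γ) f = Finset.univ.sup' Finset.univ_nonempty f ∧
    ∀ E' : (X → ℝ) → ℝ, IsCoherent E' → γ ≤ E' f →
      ∀ g : X → ℝ, lowerGamma f γ g ≤ E' g :=
  ⟨isCoherent_lowerGamma h2, lowerGamma_self h1 h2, upperE_lowerGamma_self h2,
    fun _ hE hγ => lowerGamma_le_of_isCoherent hE hγ⟩
end

section
/- Let f be a gamble on X and let I be a nonempty closed interval with I ⊆ [min f, max f]. Define E_{I,f}(g) := max{ E_{min I, f}(g), E_{−max I, −f}(g) } for all gambles g, where for a gamble h and real γ with min h ≤ γ ≤ max h, E_{γ,h}(g) := sup{ min_{x∈X}( g(x) − μ·(h(x) − γ) ) : μ ≥ 0 }. Then E_{I,f} is a coherent lower expectation with E_{I,f}(f) = min I and conjugate upper expectation value Ē_{I,f}(f) = max I. Moreover, for every coherent lower expectation E' with min I ≤ E'(f) and Ē'(f) ≤ max I, it holds that E_{I,f}(g) ≤ E'(g) for all gambles g. -/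
open Filter

/-! With `σ μ = min (μ * a) (μ * b) = min_{t ∈ [a, b]} μ * t`, the map `E_{I,f}` is the supremum
over all real `μ` of `min (g - μ • f) + σ μ`: the part `μ ≥ 0` is `E_{a,f}` and the part `μ ≤ 0` is
`E_{-b,-f}`. This is the natural extension of the assessments `E (μ • f) ≥ σ μ`. It is coherent
because `σ` is superadditive and positively homogeneous, and it lies below every coherent `E'`
satisfying the assessments, i.e. every `E'` with `a ≤ E' f` and `Ē' f ≤ b`. The bounds
`E_{I,f} f ≥ a` and `E_{I,f} (-f) ≥ -b` come from `μ = ±1`; they are sharp because a mixture of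
two point masses gives a linear prevision with any prescribed value of `f` in `[min f, max f]`. -/

namespace Finset

variable {ι α : Type*} {s : Finset ι} (H : s.Nonempty)

theorem inf'_add_const [LinearOrder α] [Add α] [AddRightMono α] (g : ι → α) (c : α) :
    s.inf' H (fun i => g i + c) = s.inf' H g + c :=
  (apply_inf'_eq_inf'_comp H (· + c) fun x y => (min_add_add_right x y c).symm).symm

theorem inf'_const_mul [Semiring α] [LinearOrder α] [PosMulMono α] {c : α} (hc : 0 ≤ c)
    (g : ι → α) : s.inf' H (fun i => c * g i) = c * s.inf' H g :=
  (apply_inf'_eq_inf'_comp H (c * ·) fun x y => mul_min_of_nonneg x y hc).symm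

end Finset

section NaturalExtension

open Finset

variable {X : Type} [Fintype X] [Nonempty X]

/-- The lower bound on `E g` implied by `E (g - μ • f) ≥ min (g - μ • f)`, `E (μ • f) ≥ σ μ` and
superadditivity. -/
noncomputable def derivedBound (f : X → ℝ) (σ : ℝ → ℝ) (g : X → ℝ) (μ : ℝ) : ℝ :=
  univ.inf' univ_nonempty (fun x => g x - μ * f x) + σ μ

/-- The natural extension of the assessments `E (μ • f) ≥ σ μ`, `μ ∈ ℝ`. -/
noncomputable def naturalExtension (f : X → ℝ) (σ : ℝ → ℝ) (g : X → ℝ) : ℝ :=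
  ⨆ μ, derivedBound f σ g μ

variable {f : X → ℝ} {σ : ℝ → ℝ}

theorem derivedBound_le_apply {μ : ℝ} {x : X} (h : σ μ ≤ μ * f x) (g : X → ℝ) :
    derivedBound f σ g μ ≤ g x := by
  have := inf'_le (fun x => g x - μ * f x) (mem_univ x)
  unfold derivedBound
  linarith

theorem derivedBound_le_sup' (hσ : ∀ μ, ∃ x, σ μ ≤ μ * f x) (g : X → ℝ) (μ : ℝ) :
    derivedBound f σ g μ ≤ univ.sup' univ_nonempty g :=
  let ⟨x, hx⟩ := hσ μ
  (derivedBound_le_apply hx g).trans (le_sup' g (mem_univ x))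

theorem bddAbove_range_derivedBound (hσ : ∀ μ, ∃ x, σ μ ≤ μ * f x) (g : X → ℝ) :
    BddAbove (Set.range (derivedBound f σ g)) :=
  ⟨_, Set.forall_mem_range.2 (derivedBound_le_sup' hσ g)⟩

theorem derivedBound_le_naturalExtension (hσ : ∀ μ, ∃ x, σ μ ≤ μ * f x) (g : X → ℝ) (μ : ℝ) :
    derivedBound f σ g μ ≤ naturalExtension f σ g :=
  le_ciSup (bddAbove_range_derivedBound hσ g) μ

theorem naturalExtension_le_sup' (hσ : ∀ μ, ∃ x, σ μ ≤ μ * f x) (g : X → ℝ) :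
    naturalExtension f σ g ≤ univ.sup' univ_nonempty g :=
  ciSup_le (derivedBound_le_sup' hσ g)

theorem naturalExtension_le {E : (X → ℝ) → ℝ} (hE : IsCoherent E)
    (hσ : ∀ μ, σ μ ≤ E (fun x => μ * f x)) (g : X → ℝ) : naturalExtension f σ g ≤ E g := by
  obtain ⟨hmin, -, hsuperadd⟩ := hE
  refine ciSup_le fun μ => ?_
  have hsplit : E (fun x => g x - μ * f x) + E (fun x => μ * f x) ≤ E g := by
    simpa using hsuperadd (fun x => g x - μ * f x) (fun x => μ * f x)
  unfold derivedBound
  linarith [hmin (fun x => g x - μ * f x), hσ μ]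

theorem derivedBound_const_mul {α : ℝ} (hα : 0 ≤ α)
    (hσ : ∀ μ, σ (α * μ) = α * σ μ) (g : X → ℝ) (μ : ℝ) :
    derivedBound f σ (fun x => α * g x) (α * μ) = α * derivedBound f σ g μ := by
  simp only [derivedBound, hσ, mul_add, ← inf'_const_mul _ hα, mul_sub, mul_assoc]

theorem derivedBound_add_le (hσ : ∀ μ ν, σ μ + σ ν ≤ σ (μ + ν)) (g₁ g₂ : X → ℝ) (μ ν : ℝ) :
    derivedBound f σ g₁ μ + derivedBound f σ g₂ ν
      ≤ derivedBound f σ (fun x => g₁ x + g₂ x) (μ + ν) := by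
  have hinf : univ.inf' univ_nonempty (fun x => g₁ x - μ * f x)
      + univ.inf' univ_nonempty (fun x => g₂ x - ν * f x)
      ≤ univ.inf' univ_nonempty (fun x => g₁ x + g₂ x - (μ + ν) * f x) :=
    le_inf' _ _ fun x hx => by
      linarith [inf'_le (fun x => g₁ x - μ * f x) hx, inf'_le (fun x => g₂ x - ν * f x) hx]
  unfold derivedBound
  linarith [hσ μ ν]

theorem isCoherent_naturalExtension (hσ : ∀ μ, ∃ x, σ μ ≤ μ * f x)
    (hσ_smul : ∀ α, 0 ≤ α → ∀ μ, σ (α * μ) = α * σ μ)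
    (hσ_add : ∀ μ ν, σ μ + σ ν ≤ σ (μ + ν)) : IsCoherent (naturalExtension f σ) := by
  have hσ0 : σ 0 = 0 := by simpa using hσ_smul 0 le_rfl 0
  have hmin (g : X → ℝ) : univ.inf' univ_nonempty g ≤ naturalExtension f σ g := by
    simpa [derivedBound, hσ0] using derivedBound_le_naturalExtension hσ g 0
  refine ⟨hmin, fun g α hα => ?_, fun g₁ g₂ => ?_⟩
  · rcases hα.eq_or_lt with rfl | hα
    · have hle := naturalExtension_le_sup' hσ fun x => 0 * g x
      have hge := hmin fun x => 0 * g x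
      simp only [zero_mul, sup'_const, inf'_const] at hle hge ⊢
      exact le_antisymm hle hge
    · have hsurj : Function.Surjective (α * ·) := fun ν => ⟨ν / α, mul_div_cancel₀ ν hα.ne'⟩
      rw [naturalExtension, naturalExtension, Real.mul_iSup_of_nonneg hα.le, ← hsurj.iSup_comp]
      simp only [derivedBound_const_mul hα.le (hσ_smul α hα.le)]
  · rw [← le_sub_iff_add_le]
    refine ciSup_le fun μ => le_sub_comm.1 (ciSup_le fun ν => le_sub_iff_add_le'.2 ?_)
    exact (derivedBound_add_le hσ_add g₁ g₂ μ ν).trans (derivedBound_le_naturalExtension hσ _ _)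

end NaturalExtension

section Interval

open Finset

variable {X : Type} [Fintype X] [Nonempty X] {f : X → ℝ} {a b : ℝ}

theorem exists_min_mul_le_mul_apply (h1 : univ.inf' univ_nonempty f ≤ a)
    (h2 : b ≤ univ.sup' univ_nonempty f) (μ : ℝ) : ∃ x, min (μ * a) (μ * b) ≤ μ * f x := by
  rcases le_total 0 μ with hμ | hμ
  · obtain ⟨x, -, hx⟩ := exists_mem_eq_sup' univ_nonempty f
    exact ⟨x, (min_le_right _ _).trans (mul_le_mul_of_nonneg_left (hx ▸ h2) hμ)⟩
  · obtain ⟨x, -, hx⟩ := exists_mem_eq_inf' univ_nonempty f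
    exact ⟨x, (min_le_left _ _).trans (mul_le_mul_of_nonpos_left (hx ▸ h1) hμ)⟩

theorem lowerGamma_eq_sSup_image (f : X → ℝ) (γ : ℝ) (g : X → ℝ) :
    lowerGamma f γ g =
      sSup ((fun μ => univ.inf' univ_nonempty (fun x => g x - μ * (f x - γ))) '' Set.Ici 0) := by
  simp only [lowerGamma, Set.image, Set.mem_Ici, eq_comm]

theorem derivedBound_interval_of_nonneg (hab : a ≤ b) (g : X → ℝ) {μ : ℝ} (hμ : 0 ≤ μ) :
    derivedBound f (fun μ => min (μ * a) (μ * b)) g μ =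
      univ.inf' univ_nonempty (fun x => g x - μ * (f x - a)) := by
  rw [derivedBound, min_eq_left (mul_le_mul_of_nonneg_left hab hμ), ← inf'_add_const]
  congr 1
  ext x
  ring

theorem derivedBound_interval_neg_of_nonneg (hab : a ≤ b) (g : X → ℝ) {μ : ℝ} (hμ : 0 ≤ μ) :
    derivedBound f (fun μ => min (μ * a) (μ * b)) g (-μ) =
      univ.inf' univ_nonempty (fun x => g x - μ * (-f x - -b)) := by
  have hμb : -μ * b ≤ -μ * a := mul_le_mul_of_nonpos_left hab (neg_nonpos.2 hμ)
  rw [derivedBound, min_eq_right hμb, ← inf'_add_const]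
  congr 1
  ext x
  ring

theorem naturalExtension_interval_eq_max (hab : a ≤ b)
    (h1 : univ.inf' univ_nonempty f ≤ a) (h2 : b ≤ univ.sup' univ_nonempty f) (g : X → ℝ) :
    naturalExtension f (fun μ => min (μ * a) (μ * b)) g =
      max (lowerGamma f a g) (lowerGamma (fun x => -f x) (-b) g) := by
  set F := derivedBound f (fun μ => min (μ * a) (μ * b)) g
  have hpos : lowerGamma f a g = sSup (F '' Set.Ici 0) := by
    rw [lowerGamma_eq_sSup_image]
    exact congrArg sSup <|
      Set.image_congr fun μ hμ => (derivedBound_interval_of_nonneg hab g hμ).symm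
  have hneg : lowerGamma (fun x => -f x) (-b) g = sSup (F '' Set.Iic 0) := by
    rw [lowerGamma_eq_sSup_image, show Set.Iic (0 : ℝ) = Neg.neg '' Set.Ici 0 by simp,
      Set.image_image]
    exact congrArg sSup <|
      Set.image_congr fun μ hμ => (derivedBound_interval_neg_of_nonneg hab g hμ).symm
  have hbdd : BddAbove (Set.range F) :=
    bddAbove_range_derivedBound (exists_min_mul_le_mul_apply h1 h2) g
  rw [hpos, hneg, ← csSup_union (hbdd.mono (Set.image_subset_range _ _)) (Set.nonempty_Ici.image _)
    (hbdd.mono (Set.image_subset_range _ _)) (Set.nonempty_Iic.image _), ← Set.image_union,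
    Set.Ici_union_Iic, Set.image_univ]
  rfl

theorem isCoherent_naturalExtension_interval (h1 : univ.inf' univ_nonempty f ≤ a)
    (h2 : b ≤ univ.sup' univ_nonempty f) :
    IsCoherent (naturalExtension f fun μ => min (μ * a) (μ * b)) :=
  isCoherent_naturalExtension (exists_min_mul_le_mul_apply h1 h2)
    (fun α hα μ => by simp only [mul_assoc, mul_min_of_nonneg _ _ hα])
    (fun μ ν => by
      rw [add_mul, add_mul]
      exact le_min (add_le_add (min_le_left _ _) (min_le_left _ _))
        (add_le_add (min_le_right _ _) (min_le_right _ _)))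

theorem min_mul_le_apply_mul {E : (X → ℝ) → ℝ} (hE : IsCoherent E) (ha : a ≤ E f)
    (hb : upperE E f ≤ b) (μ : ℝ) : min (μ * a) (μ * b) ≤ E (fun x => μ * f x) := by
  obtain ⟨-, hsmul, -⟩ := hE
  rcases le_total 0 μ with hμ | hμ
  · rw [hsmul f μ hμ]
    exact (min_le_left _ _).trans (mul_le_mul_of_nonneg_left ha hμ)
  · have hnegf : -b ≤ E (fun x => -f x) := by rw [upperE] at hb; linarith
    rw [show (fun x => μ * f x) = fun x => -μ * -f x by ext; ring, hsmul _ _ (neg_nonneg.2 hμ)]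
    calc min (μ * a) (μ * b) ≤ -μ * -b := (min_le_right _ _).trans_eq (neg_mul_neg μ b).symm
      _ ≤ -μ * E (fun x => -f x) := mul_le_mul_of_nonneg_left hnegf (neg_nonneg.2 hμ)

theorem exists_isCoherent_apply_eq {t : ℝ} (h1 : univ.inf' univ_nonempty f ≤ t)
    (h2 : t ≤ univ.sup' univ_nonempty f) :
    ∃ P : (X → ℝ) → ℝ, IsCoherent P ∧ P f = t ∧ upperE P f = t := by
  obtain ⟨x₀, -, hx₀⟩ := exists_mem_eq_inf' univ_nonempty f
  obtain ⟨x₁, -, hx₁⟩ := exists_mem_eq_sup' univ_nonempty f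
  have ht : t ∈ segment ℝ (f x₀) (f x₁) := by
    rw [segment_eq_Icc (hx₀ ▸ hx₁ ▸ h1.trans h2)]
    exact ⟨hx₀ ▸ h1, hx₁ ▸ h2⟩
  obtain ⟨p, q, hp, hq, hpq, hpqt⟩ := ht
  simp only [smul_eq_mul] at hpqt
  refine ⟨fun g => p * g x₀ + q * g x₁,
    ⟨fun g => ?_, fun g α _ => by ring, fun g₁ g₂ => (by ring : _ = _).le⟩,
    hpqt, by simp only [upperE]; linarith⟩
  set m := univ.inf' univ_nonempty g
  calc m = p * m + q * m := by rw [← add_mul, hpq, one_mul]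
    _ ≤ p * g x₀ + q * g x₁ := by gcongr <;> exact inf'_le g (mem_univ _)

theorem naturalExtension_interval_self (hab : a ≤ b) (h1 : univ.inf' univ_nonempty f ≤ a)
    (h2 : b ≤ univ.sup' univ_nonempty f) :
    naturalExtension f (fun μ => min (μ * a) (μ * b)) f = a := by
  obtain ⟨P, hP, hPf, hPf'⟩ := exists_isCoherent_apply_eq h1 (hab.trans h2)
  refine le_antisymm ?_ ?_
  · have := naturalExtension_le hP (min_mul_le_apply_mul hP hPf.ge (hPf'.trans_le hab)) f
    exact this.trans_eq hPf
  · simpa [derivedBound, hab] using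
      derivedBound_le_naturalExtension (exists_min_mul_le_mul_apply h1 h2) f 1

theorem naturalExtension_interval_neg (hab : a ≤ b) (h1 : univ.inf' univ_nonempty f ≤ a)
    (h2 : b ≤ univ.sup' univ_nonempty f) :
    naturalExtension f (fun μ => min (μ * a) (μ * b)) (fun x => -f x) = -b := by
  obtain ⟨P, hP, hPf, hPf'⟩ := exists_isCoherent_apply_eq (h1.trans hab) h2
  refine le_antisymm ?_ ?_
  · have := naturalExtension_le hP (min_mul_le_apply_mul hP (hab.trans_eq hPf.symm) hPf'.le)
      (fun x => -f x)
    rw [upperE] at hPf'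
    linarith
  · simpa [derivedBound, hab] using
      derivedBound_le_naturalExtension (exists_min_mul_le_mul_apply h1 h2) (fun x => -f x) (-1)

end Interval

/-- For a gamble `f` and a nonempty closed interval
`[a, b] ⊆ [min f, max f]`, the map `E_{I,f}(g) = max{E_{a,f}(g), E_{−b,−f}(g)}`
is a coherent lower expectation with `E_{I,f}(f) = a` and `Ē_{I,f}(f) = b`, and
it is dominated by every coherent lower expectation `E'` with `a ≤ E'(f)` and
`Ē'(f) ≤ b`. -/
theorem stmt_19 {X : Type} [Fintype X] [Nonempty X]
    (f : X → ℝ) (a b : ℝ) (hab : a ≤ b)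
    (h1 : Finset.univ.inf' Finset.univ_nonempty f ≤ a)
    (h2 : b ≤ Finset.univ.sup' Finset.univ_nonempty f) :
    IsCoherent (fun g : X → ℝ =>
      max (lowerGamma f a g) (lowerGamma (fun x => -f x) (-b) g)) ∧
    max (lowerGamma f a f) (lowerGamma (fun x => -f x) (-b) f) = a ∧
    upperE (fun g : X → ℝ =>
      max (lowerGamma f a g) (lowerGamma (fun x => -f x) (-b) g)) f = b ∧
    ∀ E' : (X → ℝ) → ℝ, IsCoherent E' → a ≤ E' f → upperE E' f ≤ b →
      ∀ g : X → ℝ,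
        max (lowerGamma f a g) (lowerGamma (fun x => -f x) (-b) g) ≤ E' g := by
  simp only [← naturalExtension_interval_eq_max hab h1 h2]
  refine ⟨isCoherent_naturalExtension_interval h1 h2, naturalExtension_interval_self hab h1 h2,
    ?_, fun E' hE' ha hb => naturalExtension_le hE' (min_mul_le_apply_mul hE' ha hb)⟩
  rw [upperE, naturalExtension_interval_neg hab h1 h2, neg_neg]
end
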